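/- arXiv:2311.04005 — 2 statements merged into one kernel-verified Lean document; each statement's English description precedes it below -/
import Mathlib

section
/- For every h in (0, 1/4), the quantity -(1+8h)√(1-4h) + (1-2h+16h²)·log((1+√(1-4h))/(1-√(1-4h))) is strictly greater than (1/3)(1-4h)²(5-8h)√(1-4h), and hence is strictly positive. -/
/-!
Put `s = √(1 - 4h) ∈ (0, 1)`. The logarithm is `2 artanh s`, whose series has positive terms,
so it strictly exceeds its first two terms `2 (s + s³/3)`. After this replacement the left-hand
side becomes, using `s² = 1 - 4h`, exactly the right-hand side.
-/

open Real

theorem sum_range_lt_log_one_add_div_one_sub {s : ℝ} (hs0 : 0 < s) (hs1 : s < 1) (n : ℕ) :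
    ∑ k ∈ Finset.range n, 2 * (1 / (2 * k + 1)) * s ^ (2 * k + 1)
      < log ((1 + s) / (1 - s)) := by
  have hterm_pos : ∀ k : ℕ, 0 < 2 * (1 / (2 * (k : ℝ) + 1)) * s ^ (2 * k + 1) :=
    fun k => by positivity
  have hseries := hasSum_log_sub_log_of_abs_lt_one (abs_lt.2 ⟨by linarith, hs1⟩)
  rw [log_div (by linarith) (by linarith)]
  calc ∑ k ∈ Finset.range n, 2 * (1 / (2 * k + 1)) * s ^ (2 * k + 1)
      < ∑ k ∈ Finset.range (n + 1), 2 * (1 / (2 * k + 1)) * s ^ (2 * k + 1) := by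
        rw [Finset.sum_range_succ]
        linarith [hterm_pos n]
    _ ≤ log (1 + s) - log (1 - s) :=
        sum_le_hasSum _ (fun k _ => (hterm_pos k).le) hseries

theorem two_mul_add_pow_three_div_three_lt_log_one_add_div_one_sub {s : ℝ} (hs0 : 0 < s)
    (hs1 : s < 1) :
    2 * (s + s ^ 3 / 3) < log ((1 + s) / (1 - s)) := by
  have := sum_range_lt_log_one_add_div_one_sub hs0 hs1 2
  norm_num [Finset.sum_range_succ] at this
  linarith

theorem key_concavity_inequality (h : ℝ) (h0 : 0 < h) (h14 : h < 1/4) :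
    -(1 + 8*h) * Real.sqrt (1 - 4*h)
      + (1 - 2*h + 16*h^2) * Real.log ((1 + Real.sqrt (1 - 4*h)) / (1 - Real.sqrt (1 - 4*h)))
      > (1/3) * (1 - 4*h)^2 * (5 - 8*h) * Real.sqrt (1 - 4*h) ∧
    -(1 + 8*h) * Real.sqrt (1 - 4*h)
      + (1 - 2*h + 16*h^2) * Real.log ((1 + Real.sqrt (1 - 4*h)) / (1 - Real.sqrt (1 - 4*h)))
      > 0 := by
  set s := Real.sqrt (1 - 4*h)
  have h4 : 0 < 1 - 4*h := by linarith
  have hs_sq : s ^ 2 = 1 - 4*h := sq_sqrt h4.le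
  have hs0 : 0 < s := sqrt_pos.2 h4
  have hs1 : s < 1 := by nlinarith
  have hcoeff : 0 < 1 - 2*h + 16*h^2 := by nlinarith [sq_nonneg (4*h - 1/4)]
  have htruncation : -(1 + 8*h) * s + (1 - 2*h + 16*h^2) * (2 * (s + s ^ 3 / 3))
      = (1/3) * (1 - 4*h)^2 * (5 - 8*h) * s := by
    rw [show s ^ 3 = (1 - 4*h) * s by rw [pow_succ, hs_sq]]
    ring
  have hlower := mul_lt_mul_of_pos_left (two_mul_add_pow_three_div_three_lt_log_one_add_div_one_sub hs0 hs1) hcoeff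
  have hrhs_pos : 0 < (1/3) * (1 - 4*h)^2 * (5 - 8*h) * s := by
    have : 0 < 5 - 8*h := by linarith
    positivity
  exact ⟨by linarith, by linarith⟩
end

section
/- Let f : ℝ → ℝ be concave on an interval [α, β] with 0 < α < β, and continuously differentiable there, with M = max over [α,β] of |f'|. Suppose n, ℓ, s, n₁, n₂, h₁, h₂, g are reals with n₁ + n₂ = n + ℓ, h₁ + h₂ = g - s + 1, 1 ≤ s ≤ ℓ, and all the ratios h₁/n₁, h₂/n₂, (g-s+1)/(n+ℓ), g/n lie in [α, β], with n, n₁, n₂ > 0 and ℓ ≤ n. Then n₁·f(h₁/n₁) + n₂·f(h₂/n₂) - n·f(g/n) ≤ (max_{[α,β]} f + 2M)·ℓ. -/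
/-!
Concavity makes the perspective `(a, x) ↦ a f(x / a)` superadditive, so the left-hand side is at
most `(n + ℓ) f(v) - n f(u)` with `v = (g - s + 1) / (n + ℓ)` and `u = g / n`. The mean value
theorem gives `f(v) ≤ f(u) + M (u - v)`, and `(n + ℓ)(u - v) = ℓ u + s - 1 ≤ 2ℓ` because `u ≤ 1`;
what remains, `ℓ f(u)`, is at most `ℓ Fmax`.
-/

noncomputable def perspective {E : Type*} [AddCommGroup E] [Module ℝ E] (f : E → ℝ) (a : ℝ)
    (x : E) : ℝ :=
  a * f (a⁻¹ • x)

theorem perspective_eq_mul_apply_div (f : ℝ → ℝ) (a x : ℝ) :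
    perspective f a x = a * f (x / a) := by
  rw [perspective, smul_eq_mul, inv_mul_eq_div]

theorem ConcaveOn.perspective_add_le {E : Type*} [AddCommGroup E] [Module ℝ E] {s : Set E}
    {f : E → ℝ} (hf : ConcaveOn ℝ s f) {a b : ℝ} (ha : 0 < a) (hb : 0 < b) {x y : E}
    (hx : a⁻¹ • x ∈ s) (hy : b⁻¹ • y ∈ s) :
    perspective f a x + perspective f b y ≤ perspective f (a + b) (x + y) := by
  have hab : 0 < a + b := add_pos ha hb
  have hweights : a / (a + b) + b / (a + b) = 1 := by rw [← add_div, div_self hab.ne']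
  have hpoint : (a / (a + b)) • a⁻¹ • x + (b / (a + b)) • b⁻¹ • y = (a + b)⁻¹ • (x + y) := by
    simp only [smul_smul, smul_add]
    congr 2 <;> field_simp
  have hconc := hf.2 hx hy (div_pos ha hab).le (div_pos hb hab).le hweights
  rw [hpoint, smul_eq_mul, smul_eq_mul] at hconc
  unfold perspective
  calc a * f (a⁻¹ • x) + b * f (b⁻¹ • y)
      = (a + b) * (a / (a + b) * f (a⁻¹ • x) + b / (a + b) * f (b⁻¹ • y)) := by field_simp
    _ ≤ (a + b) * f ((a + b)⁻¹ • (x + y)) := mul_le_mul_of_nonneg_left hconc hab.le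

theorem concave_ratio_bound_general {α β M Fmax : ℝ} (f : ℝ → ℝ)
    (hα : 0 < α) (hβ1 : β < 1)
    (hf : ConcaveOn ℝ (Set.Icc α β) f)
    (hf1 : ContDiffOn ℝ 1 f (Set.Icc α β))
    (hM : ∀ x ∈ Set.Icc α β, |deriv f x| ≤ M)
    (hFmax : ∀ x ∈ Set.Icc α β, f x ≤ Fmax)
    (n ℓ s n₁ n₂ h₁ h₂ g : ℝ)
    (hsum : n₁ + n₂ = n + ℓ) (hgen : h₁ + h₂ = g - s + 1)
    (hs1 : 1 ≤ s) (hsℓ : s ≤ ℓ)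
    (hn : 0 < n) (hn₁ : 0 < n₁) (hn₂ : 0 < n₂)
    (hr₁ : h₁ / n₁ ∈ Set.Icc α β) (hr₂ : h₂ / n₂ ∈ Set.Icc α β)
    (hr : (g - s + 1) / (n + ℓ) ∈ Set.Icc α β) (hrg : g / n ∈ Set.Icc α β) :
    n₁ * f (h₁ / n₁) + n₂ * f (h₂ / n₂) - n * f (g / n) ≤ (Fmax + 2 * M) * ℓ := by
  set u := g / n
  set v := (g - s + 1) / (n + ℓ)
  have hnℓ : 0 < n + ℓ := by linarith
  have hM0 : 0 ≤ M := (abs_nonneg _).trans (hM u hrg)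
  have hgap : (n + ℓ) * (u - v) = ℓ * u + (s - 1) := by
    simp only [u, v]
    field_simp
    ring
  have hvu : v ≤ u := by nlinarith [hrg.1]
  have hconc : n₁ * f (h₁ / n₁) + n₂ * f (h₂ / n₂) ≤ (n + ℓ) * f v := by
    simpa only [perspective_eq_mul_apply_div, hsum, hgen] using
      hf.perspective_add_le hn₁ hn₂ (x := h₁) (y := h₂) (by rwa [smul_eq_mul, inv_mul_eq_div])
        (by rwa [smul_eq_mul, inv_mul_eq_div])
  have hmvt : -M * (u - v) ≤ f u - f v :=
    (convex_Icc α β).mul_sub_le_image_sub_of_le_deriv hf1.continuousOn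
      ((hf1.differentiableOn one_ne_zero).mono interior_subset)
      (fun x hx => neg_le_of_abs_le (hM x (interior_subset hx))) v hr u hrg hvu
  calc n₁ * f (h₁ / n₁) + n₂ * f (h₂ / n₂) - n * f u
      ≤ (n + ℓ) * (f u + M * (u - v)) - n * f u := by
        nlinarith [mul_le_mul_of_nonneg_left (show f v ≤ f u + M * (u - v) by linarith) hnℓ.le]
    _ = ℓ * f u + M * (ℓ * u + (s - 1)) := by rw [← hgap]; ring
    _ ≤ ℓ * Fmax + M * (2 * ℓ) := by
        gcongr
        · linarith
        · exact hFmax u hrg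
        · nlinarith [hrg.2]
    _ = (Fmax + 2 * M) * ℓ := by ring

/-- Quantitative form of Corollary 2.8: combining concavity with a derivative bound. -/
theorem concave_ratio_bound {α β M Fmax : ℝ} (f : ℝ → ℝ)
    (hα : 0 < α) (hαβ : α < β) (hβ1 : β < 1)
    (hf : ConcaveOn ℝ (Set.Icc α β) f)
    (hf1 : ContDiffOn ℝ 1 f (Set.Icc α β))
    (hM : ∀ x ∈ Set.Icc α β, |deriv f x| ≤ M)
    (hFmax : ∀ x ∈ Set.Icc α β, f x ≤ Fmax)
    (n ℓ s n₁ n₂ h₁ h₂ g : ℝ)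
    (hsum : n₁ + n₂ = n + ℓ) (hgen : h₁ + h₂ = g - s + 1)
    (hs1 : 1 ≤ s) (hsℓ : s ≤ ℓ) (hℓn : ℓ ≤ n)
    (hn : 0 < n) (hn₁ : 0 < n₁) (hn₂ : 0 < n₂)
    (hr₁ : h₁ / n₁ ∈ Set.Icc α β) (hr₂ : h₂ / n₂ ∈ Set.Icc α β)
    (hr : (g - s + 1) / (n + ℓ) ∈ Set.Icc α β) (hrg : g / n ∈ Set.Icc α β) :
    n₁ * f (h₁ / n₁) + n₂ * f (h₂ / n₂) - n * f (g / n) ≤ (Fmax + 2 * M) * ℓ :=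
  concave_ratio_bound_general f hα hβ1 hf hf1 hM hFmax n ℓ s n₁ n₂ h₁ h₂ g hsum hgen hs1 hsℓ hn hn₁
    hn₂ hr₁ hr₂ hr hrg
end
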